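/- If after a call sequence σ agent a (with a ≠ b) is the only agent different from b familiar with the secret B of agent b, then agent b is familiar with the secret A of agent a after σ. -/
import Mathlib


/-- A call is an ordered pair of distinct agents (caller, callee). -/
def Call (n : ℕ) : Type := {p : Fin n × Fin n // p.1 ≠ p.2}

namespace Gossip

variable {n : ℕ}

/-- The caller of a call. -/
def caller (c : Call n) : Fin n := c.1.1

/-- The callee of a call. -/
def callee (c : Call n) : Fin n := c.1.2

/-- Agent `a` is involved in call `c`. -/
def involves (c : Call n) (a : Fin n) : Prop := a = caller c ∨ a = callee c

/-- A gossip situation assigns to each agent the set of secrets it is familiar with;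
secrets are identified with the agents holding them. -/
def Situation (n : ℕ) := Fin n → Finset (Fin n)

/-- The initial gossip situation: every agent only holds its own secret. -/
def root : Situation n := fun a => {a}

/-- The effect of a call on a gossip situation: caller and callee share their secrets. -/
def applyCall (c : Call n) (s : Situation n) : Situation n :=
  fun x => if x = caller c ∨ x = callee c then s (caller c) ∪ s (callee c) else s x

/-- The effect of a call sequence on a gossip situation. -/
def applySeq (σ : List (Call n)) (s : Situation n) : Situation n :=
  σ.foldl (fun t c => applyCall c t) s

end Gossip

open Gossip

namespace Gossip

lemma applySeq_append (σ : List (Call n)) (c : Call n) (s : Situation n) :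
    applySeq (σ ++ [c]) s = applyCall c (applySeq σ s) := by
  simp [applySeq, List.foldl_append]

lemma subset_applyCall (c : Call n) (t : Situation n) (x : Fin n) :
    t x ⊆ applyCall c t x := by
  unfold applyCall
  split
  · rename_i h
    rcases h with h | h <;> subst h
    · exact Finset.subset_union_left
    · exact Finset.subset_union_right
  · exact subset_rfl

lemma applyCall_not_involved (c : Call n) (t : Situation n) (x : Fin n)
    (h1 : x ≠ caller c) (h2 : x ≠ callee c) : applyCall c t x = t x := by
  unfold applyCall; simp [h1, h2]

lemma applyCall_involved (c : Call n) (t : Situation n) (x : Fin n)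
    (h : x = caller c ∨ x = callee c) :
    applyCall c t x = t (caller c) ∪ t (callee c) := by
  unfold applyCall; simp [h]

lemma self_mem_applySeq (σ : List (Call n)) (x : Fin n) :
    x ∈ applySeq σ root x := by
  suffices h : ∀ t : Situation n, (∀ y, y ∈ t y) → ∀ y, y ∈ applySeq σ t y from
    h root (fun y => by simp [root]) x
  induction σ with
  | nil => intro t ht y; exact ht y
  | cons c σ ih =>
    intro t ht y
    apply ih
    intro z
    show z ∈ applyCall c t z
    by_cases h : z = caller c ∨ z = callee c
    · rw [applyCall_involved c t z h]
      rcases h with h | h <;> subst h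
      · exact Finset.mem_union_left _ (ht _)
      · exact Finset.mem_union_right _ (ht _)
    · push_neg at h
      rw [applyCall_not_involved c t z h.1 h.2]
      exact ht z

end Gossip

/-- if `a` is the only agent different from `b` familiar with `b`'s
secret after `σ`, then `b` is familiar with `a`'s secret after `σ`. -/
theorem only_knower_implies_reciprocity {n : ℕ} (hn : 3 ≤ n) (σ : List (Call n))
    (a b : Fin n) (hab : a ≠ b)
    (ha : b ∈ applySeq σ root a)
    (honly : ∀ i : Fin n, i ≠ a → i ≠ b → b ∉ applySeq σ root i) :
    a ∈ applySeq σ root b := by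
  revert ha honly
  induction σ using List.reverseRecOn with
  | nil =>
    intro ha _
    simp [applySeq, root] at ha
    exact absurd ha.symm hab
  | append_singleton τ c ih =>
    intro ha honly
    rw [applySeq_append] at ha ⊢
    simp only [applySeq_append] at honly
    set t := applySeq τ root with ht
    have huv : caller c ≠ callee c := c.2
    have honly' : ∀ i, i ≠ a → i ≠ b → b ∉ t i := fun i hia hib h =>
      honly i hia hib (subset_applyCall c t i h)
    by_cases hbinv : b = caller c ∨ b = callee c
    · by_cases hainv : a = caller c ∨ a = callee c
      · rw [applyCall_involved c t b hbinv]
        rcases hainv with h | h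
        · exact Finset.mem_union_left _ (h ▸ self_mem_applySeq τ a)
        · exact Finset.mem_union_right _ (h ▸ self_mem_applySeq τ a)
      · push_neg at hainv
        have hta : b ∈ t a := by
          rwa [applyCall_not_involved c t a hainv.1 hainv.2] at ha
        exact subset_applyCall c t b (ih hta honly')
    · push_neg at hbinv
      have hta : b ∈ t a := by
        by_cases hainv : a = caller c ∨ a = callee c
        · rw [applyCall_involved c t a hainv, Finset.mem_union] at ha
          rcases hainv with h2 | h2 <;> subst h2
          · rcases ha with h | h
            · exact h
            · exact absurd h (honly' _ (Ne.symm huv) (Ne.symm hbinv.2))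
          · rcases ha with h | h
            · exact absurd h (honly' _ huv (Ne.symm hbinv.1))
            · exact h
        · push_neg at hainv
          rwa [applyCall_not_involved c t a hainv.1 hainv.2] at ha
      exact subset_applyCall c t b (ih hta honly')
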